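/- arXiv:1903.03611 — 4 statements merged into one kernel-verified Lean document; each statement's English description precedes it below -/
import Mathlib

section
/- (The exponential map gives a path starting at X with prescribed initial velocity.) Let X be a real N×q matrix with orthonormal columns, U a real N×q matrix with UᵀU = I_q and XᵀU = 0, V a q×q orthogonal matrix, and Σ a q×q diagonal matrix. Define γ(t) = X V cos(tΣ) Vᵀ + U sin(tΣ) Vᵀ for t ∈ ℝ. Then γ(0) = X, γ(t)ᵀγ(t) = I_q for all t, and γ is differentiable at t = 0 (entrywise) with derivative γ′(0) = U Σ Vᵀ. -/
/-!
Write `γ(t) = (A cos (tΣ) + U sin (tΣ)) Vᵀ` with `A = X V`. Since `Aᵀ A = Uᵀ U = 1` and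
`Aᵀ U = 0`, the cross terms of `γ(t)ᵀ γ(t)` vanish, leaving
`V (cos² (tΣ) + sin² (tΣ)) Vᵀ = V Vᵀ = 1`.
-/

open Matrix

/-- The geodesic path γ(t) = X V cos(tΣ) Vᵀ + U sin(tΣ) Vᵀ. -/
noncomputable def geodesicPath {N q : ℕ} (X U : Matrix (Fin N) (Fin q) ℝ)
    (V : Matrix (Fin q) (Fin q) ℝ) (σ : Fin q → ℝ) (t : ℝ) :
    Matrix (Fin N) (Fin q) ℝ :=
  X * V * Matrix.diagonal (fun i => Real.cos (t * σ i)) * Vᵀ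
    + U * Matrix.diagonal (fun i => Real.sin (t * σ i)) * Vᵀ

namespace Matrix

variable {m n p : Type*} [Fintype n] [DecidableEq n]

theorem transpose_mul_self_mul_add_mul_of_orthonormal {R : Type*} [CommSemiring R] [Fintype m]
    {A B : Matrix m n R} (hA : Aᵀ * A = 1) (hB : Bᵀ * B = 1) (hAB : Aᵀ * B = 0)
    (C S : Matrix n p R) :
    (A * C + B * S)ᵀ * (A * C + B * S) = Cᵀ * C + Sᵀ * S := by
  have hBA : Bᵀ * A = 0 := by simpa using congrArg transpose hAB
  simp only [Matrix.transpose_add, Matrix.transpose_mul, Matrix.add_mul, Matrix.mul_add,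
    Matrix.mul_assoc]
  simp only [← Matrix.mul_assoc Aᵀ, ← Matrix.mul_assoc Bᵀ, hA, hB, hAB, hBA,
    Matrix.one_mul, Matrix.zero_mul, Matrix.mul_zero, add_zero, zero_add]

theorem transpose_mul_self_mul_transpose_eq_one {R : Type*} [CommSemiring R] [Fintype m]
    {M : Matrix m n R} {V : Matrix n n R} (hM : Mᵀ * M = 1) (hV : Vᵀ * V = 1) :
    (M * Vᵀ)ᵀ * (M * Vᵀ) = 1 := by
  rw [transpose_mul, transpose_transpose, Matrix.mul_assoc, ← Matrix.mul_assoc Mᵀ, hM,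
    Matrix.one_mul, mul_eq_one_comm.mp hV]

theorem diagonal_cos_sq_add_diagonal_sin_sq (f : n → ℝ) :
    (diagonal fun k => Real.cos (f k))ᵀ * diagonal (fun k => Real.cos (f k))
      + (diagonal fun k => Real.sin (f k))ᵀ * diagonal (fun k => Real.sin (f k)) = 1 := by
  simp only [diagonal_transpose, diagonal_mul_diagonal, diagonal_add]
  rw [← diagonal_one]
  simp only [← sq, Real.cos_sq_add_sin_sq]

theorem mul_diagonal_mul_apply {α : Type*} [NonUnitalNonAssocSemiring α] [Fintype m]
    (A : Matrix m n α) (d : n → α) (B : Matrix n p α) (i : m) (j : p) :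
    (A * diagonal d * B) i j = ∑ k, A i k * d k * B k j := by
  rw [mul_apply]
  simp only [mul_diagonal]

theorem hasDerivAt_mul_diagonal_mul_apply [Fintype m] {A : Matrix m n ℝ} {B : Matrix n p ℝ}
    {d : n → ℝ → ℝ} {d' : n → ℝ} {t : ℝ} (hd : ∀ k, HasDerivAt (d k) (d' k) t)
    (i : m) (j : p) :
    HasDerivAt (fun s => (A * diagonal (fun k => d k s) * B) i j)
      ((A * diagonal d' * B) i j) t := by
  simp only [mul_diagonal_mul_apply]
  exact HasDerivAt.fun_sum fun k _ => ((hd k).const_mul (A i k)).mul_const (B k j)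

end Matrix

theorem geodesicPath_zero {N q : ℕ} (X U : Matrix (Fin N) (Fin q) ℝ)
    {V : Matrix (Fin q) (Fin q) ℝ} (σ : Fin q → ℝ) (hV : Vᵀ * V = 1) :
    geodesicPath X U V σ 0 = X := by
  simp [geodesicPath, Matrix.mul_assoc, mul_eq_one_comm.mp hV]

theorem geodesicPath_eq {N q : ℕ} (X U : Matrix (Fin N) (Fin q) ℝ)
    (V : Matrix (Fin q) (Fin q) ℝ) (σ : Fin q → ℝ) (t : ℝ) :
    geodesicPath X U V σ t = (X * V * diagonal (fun i => Real.cos (t * σ i))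
      + U * diagonal (fun i => Real.sin (t * σ i))) * Vᵀ := by
  rw [geodesicPath, Matrix.add_mul]

theorem transpose_geodesicPath_mul_self {N q : ℕ} {X U : Matrix (Fin N) (Fin q) ℝ}
    {V : Matrix (Fin q) (Fin q) ℝ} (σ : Fin q → ℝ) (hX : Xᵀ * X = 1) (hU : Uᵀ * U = 1)
    (hXU : Xᵀ * U = 0) (hV : Vᵀ * V = 1) (t : ℝ) :
    (geodesicPath X U V σ t)ᵀ * geodesicPath X U V σ t = 1 := by
  have hXV : (X * V)ᵀ * (X * V) = 1 := by
    rw [transpose_mul, Matrix.mul_assoc, ← Matrix.mul_assoc Xᵀ, hX, Matrix.one_mul, hV]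
  have hXVU : (X * V)ᵀ * U = 0 := by
    rw [transpose_mul, Matrix.mul_assoc, hXU, Matrix.mul_zero]
  rw [geodesicPath_eq]
  refine transpose_mul_self_mul_transpose_eq_one ?_ hV
  rw [transpose_mul_self_mul_add_mul_of_orthonormal hXV hU hXVU]
  exact diagonal_cos_sq_add_diagonal_sin_sq _

theorem hasDerivAt_geodesicPath_apply {N q : ℕ} (X U : Matrix (Fin N) (Fin q) ℝ)
    (V : Matrix (Fin q) (Fin q) ℝ) (σ : Fin q → ℝ) (t : ℝ) (i : Fin N) (j : Fin q) :
    HasDerivAt (fun s => geodesicPath X U V σ s i j)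
      ((X * V * diagonal (fun k => -Real.sin (t * σ k) * σ k) * Vᵀ
        + U * diagonal (fun k => Real.cos (t * σ k) * σ k) * Vᵀ) i j) t := by
  have hlin (k : Fin q) : HasDerivAt (fun s => s * σ k) (σ k) t := by
    simpa using (hasDerivAt_id t).mul_const (σ k)
  exact (hasDerivAt_mul_diagonal_mul_apply (fun k => (hlin k).cos) i j).fun_add
    (hasDerivAt_mul_diagonal_mul_apply (fun k => (hlin k).sin) i j)

/-- γ(0) = X, γ(t) has orthonormal columns for all t, and γ is differentiable
at t = 0 entrywise with derivative γ′(0) = U Σ Vᵀ. -/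
theorem geodesic_path_properties
    (N q : ℕ) (X U : Matrix (Fin N) (Fin q) ℝ)
    (V : Matrix (Fin q) (Fin q) ℝ) (σ : Fin q → ℝ)
    (hX : Xᵀ * X = 1) (hU : Uᵀ * U = 1) (hXU : Xᵀ * U = 0)
    (hV : Vᵀ * V = 1) :
    geodesicPath X U V σ 0 = X ∧
    (∀ t : ℝ, (geodesicPath X U V σ t)ᵀ * geodesicPath X U V σ t = 1) ∧
    (∀ (i : Fin N) (j : Fin q),
      HasDerivAt (fun t : ℝ => geodesicPath X U V σ t i j)
        ((U * Matrix.diagonal σ * Vᵀ) i j) 0) := by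
  refine ⟨geodesicPath_zero X U σ hV, transpose_geodesicPath_mul_self σ hX hU hXU hV,
    fun i j => ?_⟩
  simpa using hasDerivAt_geodesicPath_apply X U V σ 0 i j
end

section
/- (Log inverts Exp.) Let X be a real N×q matrix with orthonormal columns, U a real N×q matrix with UᵀU = I_q and XᵀU = 0, V a q×q orthogonal matrix, and Σ = diag(σ₁,…,σ_q) with every σᵢ ∈ [0, π/2). Set Y = X V cos(Σ) + U sin(Σ). Then XᵀY = V cos(Σ) is invertible and (I − XXᵀ) Y (XᵀY)⁻¹ = U tan(Σ) Vᵀ. Consequently, applying the logarithmic map formula Γ = U′ arctan(Σ′) V′ᵀ to a thin SVD U′Σ′V′ᵀ = U tan(Σ) Vᵀ of this matrix recovers the original initial velocity U Σ Vᵀ. -/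
/-!
The first three claims are direct computations: `Xᵀ` kills the `U`-component of `Y` and
`I - XXᵀ` kills its `X`-component, and `cos σᵢ > 0` makes `V cos(Σ)` invertible.

For the last claim, note that for `M = A diag(e) Bᵀ` with `AᵀA = BᵀB = I` one has
`MᵀM = B diag(e²) Bᵀ`, so `M p(MᵀM) = A diag(e · p(e²)) Bᵀ` for every polynomial `p`.
Choosing `p` to interpolate `x ↦ f(√x)/√x` at the squares of the singular values of two
decompositions of the same `M` shows that `A diag(f(e)) Bᵀ` does not depend on the
decomposition when `e ≥ 0` and `f 0 = 0`. Applied to `f = arctan`, the decomposition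
`U tan(Σ) Vᵀ` gives back `U Σ Vᵀ` since `arctan ∘ tan = id` on `[0, π/2)`.
-/

open Matrix Polynomial

section

variable {m n K : Type*} [Fintype m] [Fintype n] [DecidableEq n]

theorem Matrix.aeval_diagonal [CommRing K] (d : n → K) (p : K[X]) :
    aeval (diagonal d) p = diagonal fun i => p.eval (d i) := by
  rw [← diagonalAlgHom_apply (R := K), aeval_algHom_apply, aeval_pi_apply]
  simp

theorem Matrix.aeval_conj_of_transpose_mul_self [CommRing K] {B : Matrix n n K}
    (hB : Bᵀ * B = 1) (A : Matrix n n K) (p : K[X]) :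
    aeval (B * A * Bᵀ) p = B * aeval A p * Bᵀ :=
  let u : (Matrix n n K)ˣ := ⟨B, Bᵀ, mul_eq_one_comm.mp hB, hB⟩
  DFunLike.congr_fun (aeval_algEquiv (MulSemiringAction.toAlgEquiv K _ (ConjAct.toConjAct u)) A) p

theorem Matrix.svd_transpose_mul_self [CommRing K] {A : Matrix m n K} (hA : Aᵀ * A = 1)
    (B : Matrix n n K) (e : n → K) :
    (A * diagonal e * Bᵀ)ᵀ * (A * diagonal e * Bᵀ) = B * diagonal (fun i => e i * e i) * Bᵀ := by
  rw [transpose_mul, transpose_mul, transpose_transpose, diagonal_transpose]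
  calc B * (diagonal e * Aᵀ) * (A * diagonal e * Bᵀ)
      = B * (diagonal e * (Aᵀ * A) * diagonal e) * Bᵀ := by simp only [Matrix.mul_assoc]
    _ = B * diagonal (fun i => e i * e i) * Bᵀ := by
      rw [hA, Matrix.mul_one, diagonal_mul_diagonal]

theorem Matrix.svd_mul_aeval_svd_transpose_mul_self [CommRing K] {A : Matrix m n K}
    {B : Matrix n n K} (hA : Aᵀ * A = 1) (hB : Bᵀ * B = 1) (e : n → K) (p : K[X]) :
    A * diagonal e * Bᵀ * aeval ((A * diagonal e * Bᵀ)ᵀ * (A * diagonal e * Bᵀ)) p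
      = A * diagonal (fun i => e i * p.eval (e i * e i)) * Bᵀ := by
  rw [svd_transpose_mul_self hA, aeval_conj_of_transpose_mul_self hB, aeval_diagonal]
  calc A * diagonal e * Bᵀ * (B * diagonal (fun i => p.eval (e i * e i)) * Bᵀ)
      = A * (diagonal e * (Bᵀ * B) * diagonal (fun i => p.eval (e i * e i))) * Bᵀ := by
        simp only [Matrix.mul_assoc]
    _ = A * diagonal (fun i => e i * p.eval (e i * e i)) * Bᵀ := by
      rw [hB, Matrix.mul_one, diagonal_mul_diagonal]

theorem Matrix.svd_mul_diagonal_eq_of_eq [Field K] {A A' : Matrix m n K} {B B' : Matrix n n K}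
    (hA : Aᵀ * A = 1) (hB : Bᵀ * B = 1) (hA' : A'ᵀ * A' = 1) (hB' : B'ᵀ * B' = 1)
    {e e' : n → K} (g : K → K) (h : A * diagonal e * Bᵀ = A' * diagonal e' * B'ᵀ) :
    A * diagonal (fun i => e i * g (e i * e i)) * Bᵀ
      = A' * diagonal (fun i => e' i * g (e' i * e' i)) * B'ᵀ := by
  classical
  let nodes : Finset K :=
    Finset.univ.image (fun i => e i * e i) ∪ Finset.univ.image (fun i => e' i * e' i)
  let p : K[X] := Lagrange.interpolate nodes id g
  have hp : ∀ x ∈ nodes, p.eval x = g x := fun x hx =>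
    Lagrange.eval_interpolate_at_node g (Set.injOn_id _) hx
  have hpe : (fun i => e i * g (e i * e i)) = fun i => e i * p.eval (e i * e i) := by
    funext i
    rw [hp _ (Finset.mem_union_left _ (Finset.mem_image_of_mem _ (Finset.mem_univ i)))]
  have hpe' : (fun i => e' i * g (e' i * e' i)) = fun i => e' i * p.eval (e' i * e' i) := by
    funext i
    rw [hp _ (Finset.mem_union_right _ (Finset.mem_image_of_mem _ (Finset.mem_univ i)))]
  rw [hpe, hpe', ← svd_mul_aeval_svd_transpose_mul_self hA hB,
    ← svd_mul_aeval_svd_transpose_mul_self hA' hB', h]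

theorem Matrix.svd_map_eq_of_eq {A A' : Matrix m n ℝ} {B B' : Matrix n n ℝ}
    (hA : Aᵀ * A = 1) (hB : Bᵀ * B = 1) (hA' : A'ᵀ * A' = 1) (hB' : B'ᵀ * B' = 1)
    {e e' : n → ℝ} (he : ∀ i, 0 ≤ e i) (he' : ∀ i, 0 ≤ e' i) (f : ℝ → ℝ) (hf : f 0 = 0)
    (h : A * diagonal e * Bᵀ = A' * diagonal e' * B'ᵀ) :
    A * diagonal (fun i => f (e i)) * Bᵀ = A' * diagonal (fun i => f (e' i)) * B'ᵀ := by
  have hf_sqrt : ∀ c, 0 ≤ c → c * (f √(c * c) / √(c * c)) = f c := fun c hc => by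
    rw [Real.sqrt_mul_self hc, mul_div_cancel_of_imp']
    rintro rfl
    exact hf
  have := svd_mul_diagonal_eq_of_eq hA hB hA' hB' (fun x => f √x / √x) h
  simpa only [hf_sqrt _ (he _), hf_sqrt _ (he' _)] using this

theorem Matrix.transpose_mul_add_of_orthonormal [CommRing K] {X U : Matrix m n K} (hX : Xᵀ * X = 1)
    (hXU : Xᵀ * U = 0) (P Q : Matrix n n K) :
    Xᵀ * (X * P + U * Q) = P := by
  rw [Matrix.mul_add, ← Matrix.mul_assoc, ← Matrix.mul_assoc, hX, hXU, Matrix.one_mul,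
    Matrix.zero_mul, add_zero]

theorem Matrix.one_sub_mul_transpose_mul_add_of_orthonormal [CommRing K] [DecidableEq m]
    {X U : Matrix m n K} (hX : Xᵀ * X = 1) (hXU : Xᵀ * U = 0) (P Q : Matrix n n K) :
    (1 - X * Xᵀ) * (X * P + U * Q) = U * Q := by
  rw [Matrix.sub_mul, Matrix.one_mul, Matrix.mul_assoc, transpose_mul_add_of_orthonormal hX hXU,
    add_sub_cancel_left]

theorem Matrix.mul_diagonal_mul_diagonal_inv_mul_transpose [Field K]
    {V : Matrix n n K} (hV : Vᵀ * V = 1) {c : n → K} (hc : ∀ i, c i ≠ 0) :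
    V * diagonal c * (diagonal c⁻¹ * Vᵀ) = 1 := by
  have hcc : diagonal c * diagonal c⁻¹ = 1 := by
    rw [diagonal_mul_diagonal, ← diagonal_one]
    exact congrArg diagonal (funext fun i => mul_inv_cancel₀ (hc i))
  rw [Matrix.mul_assoc, ← Matrix.mul_assoc (diagonal c), hcc, Matrix.one_mul,
    mul_eq_one_comm.mp hV]

end

/-- Log inverts Exp. With σᵢ ∈ [0, π/2) and Y = X V cos(Σ) + U sin(Σ):
XᵀY = V cos(Σ) is invertible, (I − XXᵀ) Y (XᵀY)⁻¹ = U tan(Σ) Vᵀ, and applying the log-map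
formula to any thin SVD U′Σ′V′ᵀ of this matrix recovers the initial velocity U Σ Vᵀ. -/
theorem log_inverts_exp
    (N q : ℕ) (X U : Matrix (Fin N) (Fin q) ℝ)
    (V : Matrix (Fin q) (Fin q) ℝ) (σ : Fin q → ℝ)
    (hX : Xᵀ * X = 1) (hU : Uᵀ * U = 1) (hXU : Xᵀ * U = 0)
    (hV : Vᵀ * V = 1) (hσ : ∀ i, σ i ∈ Set.Ico 0 (Real.pi / 2)) :
    Xᵀ * (X * V * Matrix.diagonal (fun i => Real.cos (σ i))
            + U * Matrix.diagonal (fun i => Real.sin (σ i)))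
        = V * Matrix.diagonal (fun i => Real.cos (σ i)) ∧
    IsUnit (V * Matrix.diagonal (fun i => Real.cos (σ i))) ∧
    (1 - X * Xᵀ) * (X * V * Matrix.diagonal (fun i => Real.cos (σ i))
            + U * Matrix.diagonal (fun i => Real.sin (σ i)))
        * (V * Matrix.diagonal (fun i => Real.cos (σ i)))⁻¹
      = U * Matrix.diagonal (fun i => Real.tan (σ i)) * Vᵀ ∧
    (∀ (U' : Matrix (Fin N) (Fin q) ℝ) (V' : Matrix (Fin q) (Fin q) ℝ)
        (d' : Fin q → ℝ),
      U'ᵀ * U' = 1 → V'ᵀ * V' = 1 → (∀ i, 0 ≤ d' i) →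
      U' * Matrix.diagonal d' * V'ᵀ
          = U * Matrix.diagonal (fun i => Real.tan (σ i)) * Vᵀ →
      U' * Matrix.diagonal (fun i => Real.arctan (d' i)) * V'ᵀ
          = U * Matrix.diagonal σ * Vᵀ) := by
  have hσ' : ∀ i, -(Real.pi / 2) < σ i := fun i => by linarith [(hσ i).1, Real.pi_pos]
  have hcos : ∀ i, Real.cos (σ i) ≠ 0 := fun i =>
    (Real.cos_pos_of_mem_Ioo ⟨hσ' i, (hσ i).2⟩).ne'
  have hright := mul_diagonal_mul_diagonal_inv_mul_transpose hV hcos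
  rw [Matrix.mul_assoc X]
  refine ⟨transpose_mul_add_of_orthonormal hX hXU _ _, IsUnit.of_mul_eq_one _ hright, ?_, ?_⟩
  · rw [one_sub_mul_transpose_mul_add_of_orthonormal hX hXU, inv_eq_right_inv hright,
      Matrix.mul_assoc, ← Matrix.mul_assoc (diagonal _), diagonal_mul_diagonal, ← Matrix.mul_assoc]
    simp only [Pi.inv_apply, ← div_eq_mul_inv, ← Real.tan_eq_sin_div_cos]
  · intro U' V' d' hU' hV' hd' h
    have htan : ∀ i, 0 ≤ Real.tan (σ i) := fun i =>
      Real.tan_nonneg_of_nonneg_of_le_pi_div_two (hσ i).1 (hσ i).2.le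
    rw [svd_map_eq_of_eq hU' hV' hU hV hd' htan Real.arctan Real.arctan_zero h]
    simp only [Real.arctan_tan (hσ' _) (hσ _).2]
end

section
/- (Exp inverts Log at the level of subspaces.) Let X and Y be real N×q matrices with orthonormal columns such that XᵀY is invertible, and suppose (I − XXᵀ)Y(XᵀY)⁻¹ = UΣVᵀ where U is N×q with UᵀU = I_q and XᵀU = 0, V is q×q orthogonal, and Σ = diag(σ₁,…,σ_q) with σᵢ ≥ 0. Then the matrix Z = X V cos(arctan Σ) + U sin(arctan Σ), where cos(arctan Σ) = diag(1/√(1+σᵢ²)) and sin(arctan Σ) = diag(σᵢ/√(1+σᵢ²)), has the same column span as Y. That is, Exp_X(Log_X([Y])) = [Y] on the Grassmann manifold. -/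
open Matrix

/-- Exp inverts Log at the level of subspaces. If (I − XXᵀ)Y(XᵀY)⁻¹ = UΣVᵀ is
a thin SVD with XᵀU = 0 and σᵢ ≥ 0, then Z = X V cos(arctan Σ) + U sin(arctan Σ), with
cos(arctan Σ) = diag(1/√(1+σᵢ²)) and sin(arctan Σ) = diag(σᵢ/√(1+σᵢ²)), has the same column
span as Y: Exp_X(Log_X([Y])) = [Y]. -/
theorem exp_inverts_log
    (N q : ℕ) (X Y U : Matrix (Fin N) (Fin q) ℝ)
    (V : Matrix (Fin q) (Fin q) ℝ) (σ : Fin q → ℝ)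
    (hX : Xᵀ * X = 1) (hY : Yᵀ * Y = 1) (hXY : IsUnit (Xᵀ * Y))
    (hU : Uᵀ * U = 1) (hXU : Xᵀ * U = 0) (hV : Vᵀ * V = 1)
    (hσ : ∀ i, 0 ≤ σ i)
    (hSVD : (1 - X * Xᵀ) * Y * (Xᵀ * Y)⁻¹ = U * Matrix.diagonal σ * Vᵀ) :
    LinearMap.range
        (X * V * Matrix.diagonal (fun i => 1 / Real.sqrt (1 + σ i ^ 2))
          + U * Matrix.diagonal (fun i => σ i / Real.sqrt (1 + σ i ^ 2))).mulVecLin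
      = LinearMap.range Y.mulVecLin := by
  set c : Fin q → ℝ := fun i => 1 / Real.sqrt (1 + σ i ^ 2) with hc
  set s : Fin q → ℝ := fun i => σ i / Real.sqrt (1 + σ i ^ 2) with hs
  have hsqrt : ∀ i, Real.sqrt (1 + σ i ^ 2) ≠ 0 := fun i =>
    ne_of_gt (Real.sqrt_pos.mpr (by positivity))
  have hcne : ∀ i, c i ≠ 0 := fun i => by
    simp only [hc, one_div, ne_eq, inv_eq_zero]
    exact hsqrt i
  have hdet : IsUnit (Xᵀ * Y).det := (Matrix.isUnit_iff_isUnit_det _).mp hXY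
  have hinv : (Xᵀ * Y) * (Xᵀ * Y)⁻¹ = 1 := Matrix.mul_nonsing_inv _ hdet
  have hinv' : (Xᵀ * Y)⁻¹ * (Xᵀ * Y) = 1 := Matrix.nonsing_inv_mul _ hdet
  have hVV : V * Vᵀ = 1 := mul_eq_one_comm.mp hV
  have hdiag1 : (Matrix.diagonal fun i => c i * (c i)⁻¹) = (1 : Matrix (Fin q) (Fin q) ℝ) := by
    have h : (fun i => c i * (c i)⁻¹) = fun _ => (1 : ℝ) :=
      funext fun i => mul_inv_cancel₀ (hcne i)
    rw [h, Matrix.diagonal_one]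
  -- Y (XᵀY)⁻¹ = X + UΣVᵀ
  have hYM : Y * (Xᵀ * Y)⁻¹ = X + U * Matrix.diagonal σ * Vᵀ := by
    have h1 : (1 - X * Xᵀ) * Y * (Xᵀ * Y)⁻¹ = Y * (Xᵀ * Y)⁻¹ - X := by
      rw [Matrix.sub_mul, Matrix.sub_mul, Matrix.one_mul]
      congr 1
      rw [Matrix.mul_assoc, Matrix.mul_assoc, ← Matrix.mul_assoc Xᵀ Y, hinv, Matrix.mul_one]
    rw [h1] at hSVD
    rw [sub_eq_iff_eq_add.mp hSVD, add_comm]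
  -- Z = Y * A for an invertible A
  set A : Matrix (Fin q) (Fin q) ℝ := (Xᵀ * Y)⁻¹ * V * Matrix.diagonal c with hA
  have hZ : X * V * Matrix.diagonal c + U * Matrix.diagonal s = Y * A := by
    rw [hA, ← Matrix.mul_assoc, ← Matrix.mul_assoc, hYM, Matrix.add_mul, Matrix.add_mul]
    congr 1
    rw [Matrix.mul_assoc (U * Matrix.diagonal σ) Vᵀ V, hV, Matrix.mul_one,
      Matrix.mul_assoc, Matrix.diagonal_mul_diagonal]
    congr 1
    funext i
    simp only [hs, hc]
    field_simp
  set B : Matrix (Fin q) (Fin q) ℝ :=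
    Matrix.diagonal (fun i => (c i)⁻¹) * Vᵀ * (Xᵀ * Y) with hB
  have hAB : A * B = 1 := by
    rw [hA, hB]
    simp only [Matrix.mul_assoc]
    rw [← Matrix.mul_assoc (Matrix.diagonal c) (Matrix.diagonal fun i => (c i)⁻¹),
      Matrix.diagonal_mul_diagonal, hdiag1, Matrix.one_mul,
      ← Matrix.mul_assoc V Vᵀ, hVV, Matrix.one_mul, hinv']
  have hsurj : Function.Surjective A.mulVecLin := by
    intro v
    refine ⟨B *ᵥ v, ?_⟩
    simp [Matrix.mulVec_mulVec, hAB]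
  rw [hZ, Matrix.mulVecLin_mul, LinearMap.range_comp,
    LinearMap.range_eq_top.mpr hsurj, Submodule.map_top]
end

section
/- (Geodesic distance along the exponential map.) Let X be a real N×q matrix with orthonormal columns, U a real N×q matrix with UᵀU = I_q and XᵀU = 0, V a q×q orthogonal matrix, and Σ = diag(σ₁,…,σ_q) with every σᵢ ∈ [0, π/2]. Set Y = X V cos(Σ) + U sin(Σ). Then (XᵀY)ᵀ(XᵀY) = cos²(Σ) = diag(cos² σ₁,…,cos² σ_q); consequently the singular values of XᵀY are cos σ₁,…,cos σ_q, and the Grassmann geodesic distance satisfies d(X,Y) = sqrt(Σᵢ arccos²(cos σᵢ)) = sqrt(σ₁² + ⋯ + σ_q²), the Frobenius norm of the initial velocity's singular-value matrix Σ. -/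
open Matrix

/-- Geodesic distance along the exponential map. With σᵢ ∈ [0, π/2] and
Y = X V cos(Σ) + U sin(Σ), we get (XᵀY)ᵀ(XᵀY) = cos²(Σ), so the singular values of XᵀY are
cos σᵢ and d(X,Y) = sqrt(Σᵢ arccos²(cos σᵢ)) = sqrt(σ₁² + ⋯ + σ_q²). -/
theorem geodesic_distance_along_exp
    (N q : ℕ) (X U : Matrix (Fin N) (Fin q) ℝ)
    (V : Matrix (Fin q) (Fin q) ℝ) (σ : Fin q → ℝ)
    (hX : Xᵀ * X = 1) (hU : Uᵀ * U = 1) (hXU : Xᵀ * U = 0)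
    (hV : Vᵀ * V = 1) (hσ : ∀ i, σ i ∈ Set.Icc 0 (Real.pi / 2)) :
    (Xᵀ * (X * V * Matrix.diagonal (fun i => Real.cos (σ i))
            + U * Matrix.diagonal (fun i => Real.sin (σ i))))ᵀ
      * (Xᵀ * (X * V * Matrix.diagonal (fun i => Real.cos (σ i))
            + U * Matrix.diagonal (fun i => Real.sin (σ i))))
        = Matrix.diagonal (fun i => Real.cos (σ i) ^ 2) ∧
    Real.sqrt (∑ i, Real.arccos (Real.cos (σ i)) ^ 2)
        = Real.sqrt (∑ i, σ i ^ 2) := by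
  constructor
  · have hXY : Xᵀ * (X * V * Matrix.diagonal (fun i => Real.cos (σ i))
            + U * Matrix.diagonal (fun i => Real.sin (σ i)))
        = V * Matrix.diagonal (fun i => Real.cos (σ i)) := by
      rw [Matrix.mul_add, ← Matrix.mul_assoc, ← Matrix.mul_assoc, hX, one_mul,
        ← Matrix.mul_assoc, hXU, Matrix.zero_mul, add_zero]
    rw [hXY, Matrix.transpose_mul, Matrix.diagonal_transpose, Matrix.mul_assoc,
      ← Matrix.mul_assoc Vᵀ, hV, one_mul, Matrix.diagonal_mul_diagonal]
    congr 1
    ext i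
    ring
  · congr 1
    apply Finset.sum_congr rfl
    intro i _
    rw [Real.arccos_cos (hσ i).1 ((hσ i).2.trans (by linarith [Real.pi_pos]))]
end
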